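/- For the system x' = -λx + u², z' = -λz + u with x(0)=z(0)=0, λ > 0, and ramp input u(t) = t, the output y(t) = x(t) + t(a − z(t)) satisfies lim_{t→0⁺} y''''(t) = 2λ. In particular λ is identifiable from the output of a single ramp input. -/

import Mathlib

private lemma aux10 (lam p q r c d : ℝ) (t : ℝ) :
    HasDerivAt (fun s : ℝ => p + q*s + r*s^2 + Real.exp (-lam*s) * (c + d*s))
      (q + 2*r*t + Real.exp (-lam*t) * ((d - lam*c) + (-lam*d)*t)) t := by
  have he : HasDerivAt (fun s : ℝ => Real.exp (-lam*s)) (-lam * Real.exp (-lam*t)) t := by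
    simpa [Function.comp_def, mul_comm] using
      (Real.hasDerivAt_exp (-lam*t)).comp t ((hasDerivAt_id t).const_mul (-lam))
  have hl : HasDerivAt (fun s : ℝ => c + d*s) d t := by
    simpa using ((hasDerivAt_id t).const_mul d).const_add c
  have hq : HasDerivAt (fun s : ℝ => p + q*s + r*s^2) (q + 2*r*t) t := by
    have h1 : HasDerivAt (fun s : ℝ => p + q*s) q t := by
      simpa using ((hasDerivAt_id t).const_mul q).const_add p
    have h2 : HasDerivAt (fun s : ℝ => r*s^2) (r*(2*t)) t := by
      simpa using ((hasDerivAt_pow 2 t).const_mul r)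
    refine (h1.add h2).congr_deriv ?_; ring
  have h := hq.add (he.mul hl)
  refine h.congr_deriv ?_
  ring

private lemma uniq10 (lam : ℝ) (u w φ : ℝ → ℝ)
    (hw : ∀ t, HasDerivAt w (-lam * w t + u t) t)
    (hφ : ∀ t, HasDerivAt φ (-lam * φ t + u t) t)
    (h0 : w 0 = φ 0) : w = φ := by
  have hg : ∀ t, HasDerivAt (fun s => (w s - φ s) * Real.exp (lam * s)) 0 t := by
    intro t
    have he : HasDerivAt (fun s : ℝ => Real.exp (lam*s)) (lam * Real.exp (lam*t)) t := by
      simpa [Function.comp_def, mul_comm] using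
        (Real.hasDerivAt_exp (lam*t)).comp t ((hasDerivAt_id t).const_mul lam)
    have h := ((hw t).sub (hφ t)).mul he
    refine h.congr_deriv ?_
    rw [Pi.sub_apply]
    ring
  have hdiff : Differentiable ℝ (fun s => (w s - φ s) * Real.exp (lam * s)) :=
    fun t => (hg t).differentiableAt
  have hconst : ∀ t, (w t - φ t) * Real.exp (lam * t)
      = (w 0 - φ 0) * Real.exp (lam * 0) := by
    intro t
    exact is_const_of_deriv_eq_zero hdiff (fun s => (hg s).deriv) t 0
  funext t
  have := hconst t
  rw [h0, sub_self, zero_mul] at this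
  have hexp := Real.exp_ne_zero (lam * t)
  rcases mul_eq_zero.mp this with h | h
  · linarith
  · exact absurd h hexp

/-- with ramp input u(t)=t, the output y(t)=x(t)+t(a-z(t)) satisfies
lim_{t→0⁺} y''''(t) = 2λ. -/
theorem stmt10 (lam a : ℝ) (hlam : 0 < lam) (x z y : ℝ → ℝ)
    (hx0 : x 0 = 0) (hz0 : z 0 = 0)
    (hodex : ∀ t, HasDerivAt x (-lam * x t + t ^ 2) t)
    (hodez : ∀ t, HasDerivAt z (-lam * z t + t) t)
    (hy : ∀ t, y t = x t + t * (a - z t)) :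
    Filter.Tendsto (iteratedDeriv 4 y) (nhdsWithin 0 (Set.Ioi 0)) (nhds (2 * lam)) := by
  have hl0 : lam ≠ 0 := ne_of_gt hlam
  -- explicit solutions
  have hx' : x = (fun s : ℝ => 2/lam^3 + (-2/lam^2)*s + (1/lam)*s^2
      + Real.exp (-lam*s) * (-2/lam^3 + 0*s)) := by
    apply uniq10 lam (fun t => t^2) x _ hodex
    · intro t
      convert aux10 lam (2/lam^3) (-2/lam^2) (1/lam) (-2/lam^3) 0 t using 1
      field_simp
      ring
    · simp [hx0]
      field_simp
      ring
  have hz' : z = (fun s : ℝ => (-1/lam^2) + (1/lam)*s + 0*s^2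
      + Real.exp (-lam*s) * (1/lam^2 + 0*s)) := by
    apply uniq10 lam (fun t => t) z _ hodez
    · intro t
      convert aux10 lam (-1/lam^2) (1/lam) 0 (1/lam^2) 0 t using 1
      field_simp
      ring
    · simp [hz0]
      field_simp
      ring
  -- explicit output
  have hyF : y = (fun s : ℝ => 2/lam^3 + (a - 1/lam^2)*s + 0*s^2
      + Real.exp (-lam*s) * (-2/lam^3 + (-1/lam^2)*s)) := by
    funext t
    rw [hy t, hx', hz']
    simp only
    field_simp
    ring
  have d1 : deriv y = (fun s : ℝ => (a - 1/lam^2) + 0*s + 0*s^2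
      + Real.exp (-lam*s) * (1/lam^2 + (1/lam)*s)) := by
    funext t
    rw [hyF]
    refine HasDerivAt.deriv ?_
    refine (aux10 lam (2/lam^3) (a - 1/lam^2) 0 (-2/lam^3) (-1/lam^2) t).congr_deriv ?_
    field_simp
    ring
  have d2 : deriv (fun s : ℝ => (a - 1/lam^2) + 0*s + 0*s^2
      + Real.exp (-lam*s) * (1/lam^2 + (1/lam)*s))
      = (fun s : ℝ => 0 + 0*s + 0*s^2 + Real.exp (-lam*s) * (0 + (-1)*s)) := by
    funext t
    refine HasDerivAt.deriv ?_
    refine (aux10 lam (a - 1/lam^2) 0 0 (1/lam^2) (1/lam) t).congr_deriv ?_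
    field_simp
    ring
  have d3 : deriv (fun s : ℝ => 0 + 0*s + 0*s^2 + Real.exp (-lam*s) * (0 + (-1)*s))
      = (fun s : ℝ => 0 + 0*s + 0*s^2 + Real.exp (-lam*s) * (-1 + lam*s)) := by
    funext t
    refine HasDerivAt.deriv ?_
    refine (aux10 lam 0 0 0 0 (-1) t).congr_deriv ?_
    ring
  have d4 : deriv (fun s : ℝ => 0 + 0*s + 0*s^2 + Real.exp (-lam*s) * (-1 + lam*s))
      = (fun s : ℝ => 0 + 0*s + 0*s^2 + Real.exp (-lam*s) * (2*lam + (-lam^2)*s)) := by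
    funext t
    refine HasDerivAt.deriv ?_
    refine (aux10 lam 0 0 0 (-1) lam t).congr_deriv ?_
    ring
  have hiter : iteratedDeriv 4 y
      = (fun s : ℝ => 0 + 0*s + 0*s^2 + Real.exp (-lam*s) * (2*lam + (-lam^2)*s)) := by
    simp only [show (4:ℕ) = 0+1+1+1+1 from rfl, iteratedDeriv_succ, iteratedDeriv_zero]
    rw [d1, d2, d3, d4]
  rw [hiter]
  have hcont : Continuous (fun s : ℝ =>
      0 + 0*s + 0*s^2 + Real.exp (-lam*s) * (2*lam + (-lam^2)*s)) := by
    fun_prop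
  have h0 : (0:ℝ) + 0*(0:ℝ) + 0*(0:ℝ)^2 + Real.exp (-lam*0) * (2*lam + (-lam^2)*0)
      = 2*lam := by
    norm_num
  refine Filter.Tendsto.mono_left ?_ nhdsWithin_le_nhds
  have := hcont.tendsto 0
  simpa [h0] using this
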